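/- arXiv:1903.01165 — 2 statements merged into one kernel-verified Lean document; each statement's English description precedes it below -/
import Mathlib

section
/- In a credit-attribution setting with reliabilities p : N → [0,1], let x ∈ N and j ∈ N with j ≠ x, and regard Sh[v̄_{FC}](x) as a function of p. (i) If p_x > 0 and there exists a paper P_k with positive weight w_k > 0 such that both x and j belong to Auth_k, then p_j ↦ Sh[v̄_{FC}](x) is strictly decreasing on [0,1] (all other reliabilities fixed). (ii) If j is not a coauthor of x (i.e., no paper contains both x and j), then Sh[v̄_{FC}](x) does not depend on p_j. -/
/-!
Averaging over the reliable subsets gives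
`relExt p (vFC Auth w) S = ∑ k, w k * (1 - ∏ i ∈ S ∩ Auth k, (1 - p i))`: paper `k` earns credit
iff one of its authors in `S` is reliable. So the marginal contribution of `x` to a coalition
`S ∌ x` is `∑ k ∋ x, w k * p x * ∏ i ∈ S ∩ Auth k, (1 - p i)`. It involves only the reliabilities
of coauthors of `x`, and it is nonincreasing in `p j`; the ordering in which `j` alone precedes `x`
makes the decrease strict on a paper of positive weight shared by `x` and `j`.
-/
open Finset

attribute [local instance] Classical.propDecidable

noncomputable section

/-- `Π_{T,S}(p) = (∏_{i∈T} p i) * (∏_{i∈S\T} (1 - p i))`. -/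
def prodPi {α : Type*} (p : α → ℝ) (T S : Finset α) : ℝ :=
  (∏ i ∈ T, p i) * (∏ i ∈ S \ T, (1 - p i))

/-- Reliability extension of a TU-game. -/
def relExt {α : Type*} (p : α → ℝ) (v : Finset α → ℝ) (S : Finset α) : ℝ :=
  ∑ T ∈ S.powerset, v T * prodPi p T S

/-- The set of players preceding `x` in the ordering `σ`. -/
def precedingSet {α : Type*} [Fintype α] (σ : Fin (Fintype.card α) ≃ α) (x : α) : Finset α :=
  Finset.univ.filter fun y => σ.symm y < σ.symm x

/-- The Shapley value of player `x` in the TU-game `v`. -/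
def shapley {α : Type*} [Fintype α] (v : Finset α → ℝ) (x : α) : ℝ :=
  (1 / ((Fintype.card α).factorial : ℝ)) *
    ∑ σ : Fin (Fintype.card α) ≃ α,
      (v (insert x (precedingSet σ x)) - v (precedingSet σ x))

/-- `Pap x`: the papers having `x` among their authors. -/
def Pap {α β : Type*} [Fintype β] (Auth : β → Finset α) (x : α) : Finset β :=
  Finset.univ.filter fun k => x ∈ Auth k

/-- The full credit game. -/
def vFC {α β : Type*} [Fintype β] (Auth : β → Finset α) (w : β → ℝ) (S : Finset α) : ℝ :=
  ∑ k ∈ Finset.univ.filter (fun k => (Auth k ∩ S).Nonempty), w k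

/-- The full obligation game. -/
def vFO {α β : Type*} [Fintype β] (Auth : β → Finset α) (w : β → ℝ) (S : Finset α) : ℝ :=
  ∑ k ∈ Finset.univ.filter (fun k => Auth k ⊆ S), w k

section ReliabilityExtension

variable {α : Type*} (q : α → ℝ)

theorem sum_prodPi_powerset (S : Finset α) : ∑ T ∈ S.powerset, prodPi q T S = 1 := by
  simpa [prodPi] using (prod_add q (fun i => 1 - q i) S).symm

theorem sum_prodPi_powerset_filter_disjoint (A S : Finset α) :
    ∑ T ∈ S.powerset with Disjoint A T, prodPi q T S = ∏ i ∈ S ∩ A, (1 - q i) := by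
  -- Expand `∏ i ∈ S, (q₀ i + (1 - q i))`: zeroing the reliabilities on `A` kills every `T`
  -- meeting `A`.
  let q₀ : α → ℝ := fun i => if i ∈ A then 0 else q i
  have h_term : ∀ T ∈ S.powerset, (∏ i ∈ T, q₀ i) * ∏ i ∈ S \ T, (1 - q i)
      = if Disjoint A T then prodPi q T S else 0 := by
    intro T _
    split_ifs with hAT
    · rw [prodPi, prod_congr rfl fun i hi => if_neg (disjoint_right.mp hAT hi)]
    · obtain ⟨i, hi⟩ := not_disjoint_iff_nonempty_inter.mp hAT
      rw [prod_eq_zero (mem_inter.mp hi).2 (show q₀ i = 0 from if_pos (mem_inter.mp hi).1),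
        zero_mul]
  have h_factor : ∀ i ∈ S, q₀ i + (1 - q i) = if i ∈ A then 1 - q i else 1 := by
    intro i _
    split_ifs with hi <;> simp [q₀, hi]
  rw [sum_filter, ← sum_congr rfl h_term, ← prod_add, prod_congr rfl h_factor, prod_ite,
    prod_const_one, mul_one, filter_mem_eq_inter]

theorem sum_prodPi_powerset_filter_not_disjoint (A S : Finset α) :
    ∑ T ∈ S.powerset with ¬Disjoint A T, prodPi q T S = 1 - ∏ i ∈ S ∩ A, (1 - q i) := by
  rw [← sum_prodPi_powerset_filter_disjoint q A S, ← sum_prodPi_powerset q S,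
    ← sum_filter_add_sum_filter_not S.powerset (Disjoint A), add_sub_cancel_left]

variable {β : Type*} [Fintype β] (Auth : β → Finset α) (w : β → ℝ)

theorem relExt_vFC (S : Finset α) :
    relExt q (vFC Auth w) S = ∑ k, w k * (1 - ∏ i ∈ S ∩ Auth k, (1 - q i)) := by
  simp_rw [← sum_prodPi_powerset_filter_not_disjoint, not_disjoint_iff_nonempty_inter, mul_sum,
    sum_filter, relExt, vFC, sum_filter, sum_mul]
  rw [sum_comm]
  exact sum_congr rfl fun k _ => sum_congr rfl fun T _ => by split_ifs <;> simp

theorem relExt_vFC_insert_sub {x : α} {S : Finset α} (hx : x ∉ S) :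
    relExt q (vFC Auth w) (insert x S) - relExt q (vFC Auth w) S
      = ∑ k ∈ Pap Auth x, w k * q x * ∏ i ∈ S ∩ Auth k, (1 - q i) := by
  rw [relExt_vFC, relExt_vFC, ← sum_sub_distrib, Pap, sum_filter]
  refine sum_congr rfl fun k _ => ?_
  split_ifs with hxk
  · rw [insert_inter_of_mem hxk, prod_insert fun h => hx (mem_inter.mp h).1]
    ring
  · rw [insert_inter_of_notMem hxk, sub_self]

end ReliabilityExtension

theorem prod_one_sub_le_of_le_at_of_eq_off {α : Type*} {q q' : α → ℝ} {j : α}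
    (hq : ∀ i ≠ j, q' i = q i) (hj : q j ≤ q' j) (hq1 : ∀ i ≠ j, q i ≤ 1) (P : Finset α) :
    ∏ i ∈ P, (1 - q' i) ≤ ∏ i ∈ P, (1 - q i) := by
  by_cases hjP : j ∈ P
  · rw [← mul_prod_erase P _ hjP, ← mul_prod_erase P (fun i => 1 - q i) hjP,
      prod_congr rfl fun i hi => by rw [hq i (ne_of_mem_erase hi)]]
    exact mul_le_mul_of_nonneg_right (by linarith)
      (prod_nonneg fun i hi => sub_nonneg.mpr (hq1 i (ne_of_mem_erase hi)))
  · exact (prod_congr rfl fun i hi => by rw [hq i (ne_of_mem_of_not_mem hi hjP)]).le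

section Shapley

variable {α β : Type*} [Fintype α] [Fintype β] (Auth : β → Finset α) (w : β → ℝ)

theorem notMem_precedingSet (σ : Fin (Fintype.card α) ≃ α) (x : α) : x ∉ precedingSet σ x := by
  simp [precedingSet]

theorem exists_precedingSet_eq_singleton {x j : α} (hjx : j ≠ x) :
    ∃ σ : Fin (Fintype.card α) ≃ α, precedingSet σ x = {j} := by
  have hn : 1 < Fintype.card α := Fintype.one_lt_card_iff.mpr ⟨j, x, hjx⟩
  let i₀ : Fin (Fintype.card α) := ⟨0, by omega⟩
  let i₁ : Fin (Fintype.card α) := ⟨1, hn⟩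
  have hi₁₀ : i₁ ≠ i₀ := by simp [i₀, i₁, Fin.ext_iff]
  let e := (Fintype.equivFin α).symm.trans (Equiv.swap ((Fintype.equivFin α).symm i₀) j)
  have he₀ : e i₀ = j := Equiv.swap_apply_left _ _
  let σ := e.trans (Equiv.swap (e i₁) x)
  have hσ₀ : σ i₀ = j := by
    rw [Equiv.trans_apply, he₀]
    exact Equiv.swap_apply_of_ne_of_ne (he₀ ▸ e.injective.ne hi₁₀).symm hjx
  have hσ₁ : σ.symm x = i₁ := σ.symm_apply_eq.mpr (Equiv.swap_apply_left _ _).symm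
  refine ⟨σ, ext fun y => ?_⟩
  have h_lt : σ.symm y < i₁ ↔ σ.symm y = i₀ := by
    simp only [Fin.lt_def, Fin.ext_iff, i₀, i₁]
    omega
  simp only [precedingSet, mem_filter, mem_univ, true_and, mem_singleton, hσ₁, h_lt,
    σ.symm_apply_eq, hσ₀]

theorem shapley_relExt_vFC (q : α → ℝ) (x : α) :
    shapley (relExt q (vFC Auth w)) x = 1 / ((Fintype.card α).factorial : ℝ) *
      ∑ σ : Fin (Fintype.card α) ≃ α,
        ∑ k ∈ Pap Auth x, w k * q x * ∏ i ∈ precedingSet σ x ∩ Auth k, (1 - q i) := by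
  rw [shapley]
  congr 1
  exact sum_congr rfl fun σ _ => relExt_vFC_insert_sub q Auth w (notMem_precedingSet σ x)

theorem shapley_relExt_vFC_congr {q q' : α → ℝ} {x : α}
    (h : ∀ k, x ∈ Auth k → ∀ i ∈ Auth k, q i = q' i) :
    shapley (relExt q (vFC Auth w)) x = shapley (relExt q' (vFC Auth w)) x := by
  simp_rw [shapley_relExt_vFC]
  congr 1
  refine sum_congr rfl fun σ _ => sum_congr rfl fun k hk => ?_
  have hxk : x ∈ Auth k := (mem_filter.mp hk).2
  rw [h k hxk x hxk, prod_congr rfl fun i hi => by rw [h k hxk i (mem_inter.mp hi).2]]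

theorem shapley_relExt_vFC_lt_of_lt_coauthor {q q' : α → ℝ} {x j : α} (hjx : j ≠ x)
    (hw : ∀ k, 0 ≤ w k) (hq1 : ∀ i ≠ j, q i ≤ 1) (hqx : 0 < q x)
    (hq : ∀ i ≠ j, q' i = q i) (hj : q j < q' j)
    (hk : ∃ k, 0 < w k ∧ x ∈ Auth k ∧ j ∈ Auth k) :
    shapley (relExt q' (vFC Auth w)) x < shapley (relExt q (vFC Auth w)) x := by
  obtain ⟨k₀, hwk₀, hxk₀, hjk₀⟩ := hk
  obtain ⟨σ₀, hσ₀⟩ := exists_precedingSet_eq_singleton hjx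
  have hq'x : q' x = q x := hq x hjx.symm
  have h_le : ∀ σ k, w k * q' x * ∏ i ∈ precedingSet σ x ∩ Auth k, (1 - q' i)
      ≤ w k * q x * ∏ i ∈ precedingSet σ x ∩ Auth k, (1 - q i) := fun σ k => by
    rw [hq'x]
    exact mul_le_mul_of_nonneg_left (prod_one_sub_le_of_le_at_of_eq_off hq hj.le hq1 _)
      (mul_nonneg (hw k) hqx.le)
  have h_lt : w k₀ * q' x * ∏ i ∈ precedingSet σ₀ x ∩ Auth k₀, (1 - q' i)
      < w k₀ * q x * ∏ i ∈ precedingSet σ₀ x ∩ Auth k₀, (1 - q i) := by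
    rw [hσ₀, singleton_inter_of_mem hjk₀, prod_singleton, prod_singleton, hq'x]
    exact mul_lt_mul_of_pos_left (by linarith) (mul_pos hwk₀ hqx)
  simp_rw [shapley_relExt_vFC]
  refine mul_lt_mul_of_pos_left ?_ (by positivity)
  exact sum_lt_sum (fun σ _ => sum_le_sum fun k _ => h_le σ k)
    ⟨σ₀, mem_univ _, sum_lt_sum (fun k _ => h_le σ₀ k)
      ⟨k₀, mem_filter.mpr ⟨mem_univ _, hxk₀⟩, h_lt⟩⟩

end Shapley

theorem stmt_10_general {α β : Type*} [Fintype α] [Fintype β] [DecidableEq α]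
    (Auth : β → Finset α)
    (w : β → ℝ) (hw : ∀ k, 0 ≤ w k)
    (p : α → ℝ) (hp : ∀ i, p i ∈ Set.Icc (0 : ℝ) 1)
    (x j : α) (hjx : j ≠ x) :
    ((0 < p x → (∃ k, 0 < w k ∧ x ∈ Auth k ∧ j ∈ Auth k) →
        StrictAntiOn (fun t => shapley (relExt (Function.update p j t) (vFC Auth w)) x)
          (Set.Icc 0 1))) ∧
      ((∀ k, ¬(x ∈ Auth k ∧ j ∈ Auth k)) → ∀ t ∈ Set.Icc (0 : ℝ) 1, ∀ s ∈ Set.Icc (0 : ℝ) 1,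
        shapley (relExt (Function.update p j t) (vFC Auth w)) x =
          shapley (relExt (Function.update p j s) (vFC Auth w)) x) := by
  refine ⟨fun hpx hk t _ s _ hts => ?_, fun h_not_coauthor t _ s _ => ?_⟩
  · refine shapley_relExt_vFC_lt_of_lt_coauthor Auth w hjx hw
      (fun i hi => by simpa [Function.update_of_ne hi] using (hp i).2)
      (by rwa [Function.update_of_ne hjx.symm]) (fun i hi => by simp [Function.update_of_ne hi])
      (by simpa using hts) hk
  · refine shapley_relExt_vFC_congr Auth w fun k hxk i hi => ?_
    have hij : i ≠ j := fun hij => h_not_coauthor k ⟨hxk, hij ▸ hi⟩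
    simp [Function.update_of_ne hij]

theorem stmt_10 {α β : Type*} [Fintype α] [Fintype β] [DecidableEq α]
    (Auth : β → Finset α) (hAuth : ∀ k, (Auth k).Nonempty)
    (w : β → ℝ) (hw : ∀ k, 0 ≤ w k)
    (p : α → ℝ) (hp : ∀ i, p i ∈ Set.Icc (0 : ℝ) 1)
    (x j : α) (hjx : j ≠ x) :
    ((0 < p x → (∃ k, 0 < w k ∧ x ∈ Auth k ∧ j ∈ Auth k) →
        StrictAntiOn (fun t => shapley (relExt (Function.update p j t) (vFC Auth w)) x)
          (Set.Icc 0 1))) ∧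
      ((∀ k, ¬(x ∈ Auth k ∧ j ∈ Auth k)) → ∀ t ∈ Set.Icc (0 : ℝ) 1, ∀ s ∈ Set.Icc (0 : ℝ) 1,
        shapley (relExt (Function.update p j t) (vFC Auth w)) x =
          shapley (relExt (Function.update p j s) (vFC Auth w)) x) :=
  stmt_10_general Auth w hw p hp x j hjx

end
end

section
/- In a credit-attribution setting with reliabilities p : N → [0,1], let x ∈ N and j ∈ N with j ≠ x, and regard Sh[v̄_{FO}](x) as a function of p. (i) If p_i > 0 for all i ≠ j and there exists a paper P_k with positive weight w_k > 0 such that both x and j belong to Auth_k, then p_j ↦ Sh[v̄_{FO}](x) is strictly increasing on [0,1] (all other reliabilities fixed). (ii) If j is not a coauthor of x (i.e., no paper contains both x and j), then Sh[v̄_{FO}](x) does not depend on p_j. -/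
open Finset

attribute [local instance] Classical.propDecidable

noncomputable section

/-! `v_FO = ∑ₖ wₖ · u_{Auth k}` for the unanimity games `u_A(S) = [A ⊆ S]`, and the reliability
extension multiplies `u_A` by `∏_{i ∈ A} pᵢ`. By linearity of the Shapley value,
`Sh[v̄_FO](x) = ∑ₖ wₖ (∏_{i ∈ Auth k} pᵢ) Sh[u_{Auth k}](x)`, which is affine in `p_j` with slope
`∑_{k : j ∈ Auth k} wₖ (∏_{i ∈ Auth k \ {j}} pᵢ) Sh[u_{Auth k}](x)`. Now `Sh[u_A](x) ≥ 0`, it is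
positive when `x ∈ A` (order the players with `x` last) and zero when `x ∉ A` (`x` is a null
player), so the slope is positive in case (i) and zero in case (ii). -/

def unanimityGame {α : Type*} (A S : Finset α) : ℝ :=
  if A ⊆ S then 1 else 0

section Shapley

variable {α : Type*} [Fintype α]

lemma shapley_sum {ι : Type*} (s : Finset ι) (c : ι → ℝ) (v : ι → Finset α → ℝ) (x : α) :
    shapley (fun S => ∑ k ∈ s, c k * v k S) x = ∑ k ∈ s, c k * shapley (v k) x := by
  simp only [shapley, ← sum_sub_distrib, ← mul_sub, mul_sum]
  rw [sum_comm]
  exact sum_congr rfl fun k _ => sum_congr rfl fun σ _ => by ring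

lemma shapley_nonneg_of_monotone {v : Finset α → ℝ} (hv : Monotone v) (x : α) :
    0 ≤ shapley v x :=
  mul_nonneg (by positivity) <| sum_nonneg fun σ _ =>
    sub_nonneg.mpr <| hv <| subset_insert x _

lemma shapley_eq_zero_of_null {v : Finset α → ℝ} {x : α}
    (hx : ∀ S, v (insert x S) = v S) : shapley v x = 0 := by
  simp [shapley, hx]

lemma exists_precedingSet_eq_erase (x : α) :
    ∃ σ : Fin (Fintype.card α) ≃ α, precedingSet σ x = univ.erase x := by
  have hn : 0 < Fintype.card α := Fintype.card_pos_iff.mpr ⟨x⟩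
  let last : Fin (Fintype.card α) := ⟨Fintype.card α - 1, by omega⟩
  let e : Fin (Fintype.card α) ≃ α := (Fintype.equivFin α).symm
  refine ⟨(Equiv.swap (e.symm x) last).trans e, ?_⟩
  ext y
  have hlast : ∀ i : Fin (Fintype.card α), i < last ↔ i ≠ last := fun i => by
    rw [ne_eq, Fin.ext_iff, Fin.lt_def]
    have := i.isLt
    simp only [last]
    omega
  simp [precedingSet, hlast, Equiv.swap_apply_eq_iff]

end Shapley

section Unanimity

variable {α : Type*}

lemma unanimityGame_mono (A : Finset α) : Monotone (unanimityGame A) := by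
  intro S T hST
  unfold unanimityGame
  split_ifs with hS hT
  exacts [le_rfl, absurd (hS.trans hST) hT, zero_le_one, le_rfl]

lemma unanimityGame_insert_of_notMem {A : Finset α} {x : α} (hx : x ∉ A) (S : Finset α) :
    unanimityGame A (insert x S) = unanimityGame A S := by
  simp only [unanimityGame, subset_insert_iff_of_notMem hx]

lemma shapley_unanimityGame_pos [Fintype α] {A : Finset α} {x : α} (hx : x ∈ A) :
    0 < shapley (unanimityGame A) x := by
  obtain ⟨σ, hσ⟩ := exists_precedingSet_eq_erase x
  refine mul_pos (by positivity) <| sum_pos' (fun σ _ => sub_nonneg.mpr <|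
    unanimityGame_mono A <| subset_insert x _) ⟨σ, mem_univ σ, ?_⟩
  simp [unanimityGame, hσ, hx, subset_iff]

lemma relExt_sum {ι : Type*} (p : α → ℝ) (s : Finset ι) (c : ι → ℝ) (v : ι → Finset α → ℝ)
    (S : Finset α) :
    relExt p (fun S => ∑ k ∈ s, c k * v k S) S = ∑ k ∈ s, c k * relExt p (v k) S := by
  simp only [relExt, sum_mul, mul_sum]
  rw [sum_comm]
  exact sum_congr rfl fun k _ => sum_congr rfl fun T _ => by ring

lemma relExt_unanimityGame (p : α → ℝ) (A S : Finset α) :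
    relExt p (unanimityGame A) S = (∏ i ∈ A, p i) * unanimityGame A S := by
  simp only [relExt, unanimityGame, ite_mul, one_mul, zero_mul, ← sum_filter]
  split_ifs with hAS
  -- Expanding `∏ i ∈ S, (p i + g i)` with `g = 0` on `A` keeps exactly the subsets `T ⊇ A`.
  · calc ∑ T ∈ S.powerset with A ⊆ T, prodPi p T S
        = ∑ T ∈ S.powerset, (∏ i ∈ T, p i) * ∏ i ∈ S \ T, if i ∉ A then 1 - p i else 0 := by
          rw [sum_filter]
          refine sum_congr rfl fun T hT => ?_
          have hAT : (∀ i ∈ S \ T, i ∉ A) ↔ A ⊆ T := by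
            simp only [mem_sdiff, and_imp]
            exact ⟨fun h i hi => by_contra (h i (hAS hi) · hi), fun h i _ hiT hi => hiT (h hi)⟩
          simp only [prod_ite_zero, hAT, prodPi, mul_ite, mul_zero]
      _ = ∏ i ∈ S, (p i + if i ∉ A then 1 - p i else 0) := (prod_add _ _ S).symm
      _ = ∏ i ∈ S, if i ∈ A then p i else 1 :=
          prod_congr rfl fun i _ => by by_cases hi : i ∈ A <;> simp [hi]
      _ = (∏ i ∈ A, p i) * 1 := by rw [prod_ite_mem, inter_eq_right.mpr hAS, mul_one]
  · rw [mul_zero]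
    exact sum_eq_zero fun T hT => absurd ((mem_filter.mp hT).2.trans
      (mem_powerset.mp (mem_filter.mp hT).1)) hAS

end Unanimity

lemma vFO_eq_sum_unanimityGame {α β : Type*} [Fintype β] (Auth : β → Finset α) (w : β → ℝ) :
    vFO Auth w = fun S => ∑ k, w k * unanimityGame (Auth k) S := by
  funext S
  simp [vFO, unanimityGame, sum_filter]

lemma shapley_relExt_vFO {α β : Type*} [Fintype α] [Fintype β] (Auth : β → Finset α)
    (w : β → ℝ) (p : α → ℝ) (x : α) :
    shapley (relExt p (vFO Auth w)) x =
      ∑ k, w k * (∏ i ∈ Auth k, p i) * shapley (unanimityGame (Auth k)) x := by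
  have : relExt p (vFO Auth w) =
      fun S => ∑ k, (w k * ∏ i ∈ Auth k, p i) * unanimityGame (Auth k) S := by
    funext S
    simp only [vFO_eq_sum_unanimityGame, relExt_sum, relExt_unanimityGame, mul_assoc]
  rw [this, shapley_sum]

lemma shapley_relExt_vFO_update {α β : Type*} [Fintype α] [Fintype β] [DecidableEq α]
    (Auth : β → Finset α) (w : β → ℝ) (p : α → ℝ) (x j : α) (t : ℝ) :
    shapley (relExt (Function.update p j t) (vFO Auth w)) x =
      ∑ k with j ∉ Auth k, w k * (∏ i ∈ Auth k, p i) * shapley (unanimityGame (Auth k)) x +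
        t * ∑ k with j ∈ Auth k,
          w k * (∏ i ∈ Auth k \ {j}, p i) * shapley (unanimityGame (Auth k)) x := by
  rw [shapley_relExt_vFO, ← sum_filter_not_add_sum_filter univ (j ∈ Auth ·), mul_sum]
  congr 1
  · refine sum_congr rfl fun k hk => ?_
    rw [prod_update_of_notMem (mem_filter.mp hk).2]
  · refine sum_congr rfl fun k hk => ?_
    rw [prod_update_of_mem (mem_filter.mp hk).2]
    ring

theorem stmt_11_general {α β : Type*} [Fintype α] [Fintype β] [DecidableEq α]
    (Auth : β → Finset α) (w : β → ℝ) (hw : ∀ k, 0 ≤ w k) (p : α → ℝ) (x j : α) :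
    ((∀ i, i ≠ j → 0 < p i) → (∃ k, 0 < w k ∧ x ∈ Auth k ∧ j ∈ Auth k) →
        StrictMonoOn (fun t => shapley (relExt (Function.update p j t) (vFO Auth w)) x)
          (Set.Icc 0 1)) ∧
      ((∀ k, ¬(x ∈ Auth k ∧ j ∈ Auth k)) → ∀ t ∈ Set.Icc (0 : ℝ) 1, ∀ s ∈ Set.Icc (0 : ℝ) 1,
        shapley (relExt (Function.update p j t) (vFO Auth w)) x =
          shapley (relExt (Function.update p j s) (vFO Auth w)) x) := by
  simp only [shapley_relExt_vFO_update]
  set b := ∑ k with j ∈ Auth k,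
    w k * (∏ i ∈ Auth k \ {j}, p i) * shapley (unanimityGame (Auth k)) x
  refine ⟨fun hp ⟨k₀, hk₀, hxk₀, hjk₀⟩ => ?_, fun hno t _ s _ => ?_⟩
  · have hprod : ∀ k, 0 < ∏ i ∈ Auth k \ {j}, p i := fun k =>
      prod_pos fun i hi => hp i (notMem_singleton.mp (mem_sdiff.mp hi).2)
    have hb : 0 < b := sum_pos'
      (fun k _ => mul_nonneg (mul_nonneg (hw k) (hprod k).le)
        (shapley_nonneg_of_monotone (unanimityGame_mono _) x))
      ⟨k₀, mem_filter.mpr ⟨mem_univ k₀, hjk₀⟩,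
        mul_pos (mul_pos hk₀ (hprod k₀)) (shapley_unanimityGame_pos hxk₀)⟩
    exact ((strictMono_mul_right_of_pos hb).const_add _).strictMonoOn _
  · have hb : b = 0 := sum_eq_zero fun k hk => by
      rw [shapley_eq_zero_of_null (unanimityGame_insert_of_notMem
        fun hx => hno k ⟨hx, (mem_filter.mp hk).2⟩), mul_zero]
    rw [hb, mul_zero, mul_zero]

theorem stmt_11 {α β : Type*} [Fintype α] [Fintype β] [DecidableEq α]
    (Auth : β → Finset α) (hAuth : ∀ k, (Auth k).Nonempty)
    (w : β → ℝ) (hw : ∀ k, 0 ≤ w k)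
    (p : α → ℝ) (hp : ∀ i, p i ∈ Set.Icc (0 : ℝ) 1)
    (x j : α) (hjx : j ≠ x) :
    ((∀ i, i ≠ j → 0 < p i) → (∃ k, 0 < w k ∧ x ∈ Auth k ∧ j ∈ Auth k) →
        StrictMonoOn (fun t => shapley (relExt (Function.update p j t) (vFO Auth w)) x)
          (Set.Icc 0 1)) ∧
      ((∀ k, ¬(x ∈ Auth k ∧ j ∈ Auth k)) → ∀ t ∈ Set.Icc (0 : ℝ) 1, ∀ s ∈ Set.Icc (0 : ℝ) 1,
        shapley (relExt (Function.update p j t) (vFO Auth w)) x =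
          shapley (relExt (Function.update p j s) (vFO Auth w)) x) :=
  stmt_11_general Auth w hw p x j

end
end
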